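/- arXiv:2206.12810 — 11 statements merged into one kernel-verified Lean document; each statement's English description precedes it below -/
import Mathlib

section
/- In any perm algebra A with derivation d, the operation a ≻ b := d(a)·b satisfies ⟨x₁, x₂ ≻ x₃, x₄⟩ = ⟨x₁, x₃, x₂ ≻ x₄⟩, where ⟨a,b,c⟩ = (a ≻ b) ≻ c − a ≻ (b ≻ c) is the associator of ≻. -/
/-- `a ≻ b := d a * b` in a perm algebra with derivation. -/
def succOp {A : Type*} [NonUnitalRing A] (d : A → A) (a b : A) : A := d a * b

/-- The associator of `≻`. -/
def succAssoc {A : Type*} [NonUnitalRing A] (d : A → A) (a b c : A) : A :=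
  succOp d (succOp d a b) c - succOp d a (succOp d b c)

/-! The Leibniz rule collapses the associator of `≻` to `⟨a, b, c⟩ = d² a · b · c`, and in a perm
algebra the factors of a product other than the last one may be permuted freely. -/

theorem succAssoc_eq_mul {A : Type*} [NonUnitalRing A] (d : A → A)
    (hleib : ∀ a b : A, d (a * b) = d a * b + a * d b) (a b c : A) :
    succAssoc d a b c = d (d a) * b * c := by
  simp only [succAssoc, succOp, hleib, add_mul, mul_assoc, add_sub_cancel_right]

theorem mul_right_comm_mul_of_perm {A : Type*} [Semigroup A]
    (perm : ∀ a b c : A, a * b * c = b * a * c) (a b c e : A) :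
    a * b * c * e = a * c * b * e :=
  calc a * b * c * e = c * (a * b) * e := perm _ _ _
    _ = c * a * b * e := by rw [← mul_assoc c]
    _ = a * c * b * e := by rw [perm c a]

theorem perm_der_succ_assoc_identity_general {A : Type*} [NonUnitalRing A]
    (perm : ∀ a b c : A, a * b * c = b * a * c)
    (d : A → A)
    (hleib : ∀ a b : A, d (a * b) = d a * b + a * d b)
    (x₁ x₂ x₃ x₄ : A) :
    succAssoc d x₁ (succOp d x₂ x₃) x₄ = succAssoc d x₁ x₃ (succOp d x₂ x₄) := by
  rw [succAssoc_eq_mul d hleib, succAssoc_eq_mul d hleib]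
  simp only [succOp, ← mul_assoc]
  exact mul_right_comm_mul_of_perm perm _ _ _ _

/-- In any perm algebra with derivation `d`, the operation `a ≻ b := d a * b`
satisfies `⟨x₁, x₂ ≻ x₃, x₄⟩ = ⟨x₁, x₃, x₂ ≻ x₄⟩`. -/
theorem perm_der_succ_assoc_identity {A : Type*} [NonUnitalRing A]
    (perm : ∀ a b c : A, a * b * c = b * a * c)
    (d : A → A) (hadd : ∀ a b : A, d (a + b) = d a + d b)
    (hleib : ∀ a b : A, d (a * b) = d a * b + a * d b)
    (x₁ x₂ x₃ x₄ : A) :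
    succAssoc d x₁ (succOp d x₂ x₃) x₄ = succAssoc d x₁ x₃ (succOp d x₂ x₄) :=
  perm_der_succ_assoc_identity_general perm d hleib x₁ x₂ x₃ x₄
end

section
/- In any perm algebra A with derivation d, the operation a ≺ b := a·d(b) satisfies the right-commutativity identity ((x₁ ≺ x₂) ≺ x₃) ≺ x₄ = ((x₁ ≺ x₃) ≺ x₂) ≺ x₄. -/
/-- `a ≺ b := a * d b` in a perm algebra with derivation. -/
def precOp {A : Type*} [NonUnitalRing A] (d : A → A) (a b : A) : A := a * d b

theorem mul_mul_mul_right_comm_of_perm {S : Type*} [Semigroup S]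
    (perm : ∀ a b c : S, a * b * c = b * a * c) (a b c e : S) :
    a * b * c * e = a * c * b * e := by
  calc a * b * c * e = c * (a * b) * e := perm (a * b) c e
    _ = c * a * b * e := by rw [← mul_assoc]
    _ = a * c * b * e := by rw [perm c a]

theorem perm_der_prec_right_comm_general {A : Type*} [NonUnitalRing A]
    (perm : ∀ a b c : A, a * b * c = b * a * c)
    (d : A → A)
    (x₁ x₂ x₃ x₄ : A) :
    precOp d (precOp d (precOp d x₁ x₂) x₃) x₄ =
      precOp d (precOp d (precOp d x₁ x₃) x₂) x₄ :=
  mul_mul_mul_right_comm_of_perm perm x₁ (d x₂) (d x₃) (d x₄)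

/-- In any perm algebra with derivation `d`, the operation `a ≺ b := a * d b`
satisfies `((x₁ ≺ x₂) ≺ x₃) ≺ x₄ = ((x₁ ≺ x₃) ≺ x₂) ≺ x₄`. -/
theorem perm_der_prec_right_comm {A : Type*} [NonUnitalRing A]
    (perm : ∀ a b c : A, a * b * c = b * a * c)
    (d : A → A) (hadd : ∀ a b : A, d (a + b) = d a + d b)
    (hleib : ∀ a b : A, d (a * b) = d a * b + a * d b)
    (x₁ x₂ x₃ x₄ : A) :
    precOp d (precOp d (precOp d x₁ x₂) x₃) x₄ =
      precOp d (precOp d (precOp d x₁ x₃) x₂) x₄ :=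
  perm_der_prec_right_comm_general perm d x₁ x₂ x₃ x₄
end

section
/- In any perm algebra A with derivation d, the operation a ≺ b := a·d(b) is left-symmetric (pre-Lie): (x₁ ≺ x₂) ≺ x₃ − x₁ ≺ (x₂ ≺ x₃) = (x₂ ≺ x₁) ≺ x₃ − x₂ ≺ (x₁ ≺ x₃). -/
/-- The two `a * d b * d c` terms cancel by the Leibniz rule, so the associator of `≺` is
symmetric in `a`, `b` as soon as `a * b * _` is. -/
theorem precOp_precOp_sub_precOp_precOp {A : Type*} [NonUnitalRing A] {d : A → A}
    (hleib : ∀ a b : A, d (a * b) = d a * b + a * d b) (a b c : A) :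
    precOp d (precOp d a b) c - precOp d a (precOp d b c) = -(a * b * d (d c)) := by
  simp only [precOp, hleib, mul_add, ← mul_assoc]
  abel

theorem perm_der_prec_left_symmetric_general {A : Type*} [NonUnitalRing A]
    (perm : ∀ a b c : A, a * b * c = b * a * c)
    (d : A → A)
    (hleib : ∀ a b : A, d (a * b) = d a * b + a * d b)
    (x₁ x₂ x₃ : A) :
    precOp d (precOp d x₁ x₂) x₃ - precOp d x₁ (precOp d x₂ x₃) =
      precOp d (precOp d x₂ x₁) x₃ - precOp d x₂ (precOp d x₁ x₃) := by
  rw [precOp_precOp_sub_precOp_precOp hleib, precOp_precOp_sub_precOp_precOp hleib, perm]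

/-- In any perm algebra with derivation `d`, the operation `a ≺ b := a * d b`
is left-symmetric (pre-Lie). -/
theorem perm_der_prec_left_symmetric {A : Type*} [NonUnitalRing A]
    (perm : ∀ a b c : A, a * b * c = b * a * c)
    (d : A → A) (hadd : ∀ a b : A, d (a + b) = d a + d b)
    (hleib : ∀ a b : A, d (a * b) = d a * b + a * d b)
    (x₁ x₂ x₃ : A) :
    precOp d (precOp d x₁ x₂) x₃ - precOp d x₁ (precOp d x₂ x₃) =
      precOp d (precOp d x₂ x₁) x₃ - precOp d x₂ (precOp d x₁ x₃) :=
  perm_der_prec_left_symmetric_general perm d hleib x₁ x₂ x₃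
end

section
/- In any perm algebra A with derivation d, the two operations x ⊢ y := x·d(y) and x ⊣ y := d(y)·x satisfy the 0-identities of dialgebras: (x₁ ⊣ x₂) ⊢ x₃ = (x₁ ⊢ x₂) ⊢ x₃ and x₁ ⊣ (x₂ ⊢ x₃) = x₁ ⊣ (x₂ ⊣ x₃). -/
/-- `x ⊢ y := x * d y`. -/
def vdashOp {A : Type*} [NonUnitalRing A] (d : A → A) (x y : A) : A := x * d y

/-- `x ⊣ y := d y * x`. -/
def dashvOp {A : Type*} [NonUnitalRing A] (d : A → A) (x y : A) : A := d y * x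

section PermAlgebra

variable {A : Type*} [NonUnitalRing A]

theorem vdashOp_dashvOp_eq_vdashOp_vdashOp (perm : ∀ a b c : A, a * b * c = b * a * c)
    (d : A → A) (x y z : A) :
    vdashOp d (dashvOp d x y) z = vdashOp d (vdashOp d x y) z :=
  perm (d y) x (d z)

-- By Leibniz both sides are sums of two words, which match after swapping their first two letters.
theorem dashvOp_vdashOp_eq_dashvOp_dashvOp (perm : ∀ a b c : A, a * b * c = b * a * c)
    (d : A → A) (hleib : ∀ a b : A, d (a * b) = d a * b + a * d b) (x y z : A) :
    dashvOp d x (vdashOp d y z) = dashvOp d x (dashvOp d y z) := by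
  simp only [vdashOp, dashvOp, hleib, add_mul]
  rw [perm (d y) (d z) x, perm y (d (d z)) x, add_comm]

end PermAlgebra

theorem perm_der_zero_identities_general {A : Type*} [NonUnitalRing A]
    (perm : ∀ a b c : A, a * b * c = b * a * c)
    (d : A → A)
    (hleib : ∀ a b : A, d (a * b) = d a * b + a * d b)
    (x₁ x₂ x₃ : A) :
    vdashOp d (dashvOp d x₁ x₂) x₃ = vdashOp d (vdashOp d x₁ x₂) x₃ ∧
    dashvOp d x₁ (vdashOp d x₂ x₃) = dashvOp d x₁ (dashvOp d x₂ x₃) :=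
  ⟨vdashOp_dashvOp_eq_vdashOp_vdashOp perm d x₁ x₂ x₃,
    dashvOp_vdashOp_eq_dashvOp_dashvOp perm d hleib x₁ x₂ x₃⟩

/-- In any perm algebra with derivation `d`, the operations `⊢` and `⊣`
satisfy the 0-identities of dialgebras. -/
theorem perm_der_zero_identities {A : Type*} [NonUnitalRing A]
    (perm : ∀ a b c : A, a * b * c = b * a * c)
    (d : A → A) (hadd : ∀ a b : A, d (a + b) = d a + d b)
    (hleib : ∀ a b : A, d (a * b) = d a * b + a * d b)
    (x₁ x₂ x₃ : A) :
    vdashOp d (dashvOp d x₁ x₂) x₃ = vdashOp d (vdashOp d x₁ x₂) x₃ ∧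
    dashvOp d x₁ (vdashOp d x₂ x₃) = dashvOp d x₁ (dashvOp d x₂ x₃) :=
  perm_der_zero_identities_general perm d hleib x₁ x₂ x₃
end

section
/- In any perm algebra A with derivation d, the operations x ⊢ y := x·d(y) and x ⊣ y := d(y)·x satisfy the Novikov dialgebra identities: (x₁⊢x₂)⊢x₃ − x₁⊢(x₂⊢x₃) = (x₂⊢x₁)⊢x₃ − x₂⊢(x₁⊢x₃), (x₁⊣x₂)⊣x₃ = (x₁⊣x₃)⊣x₂, (x₁⊣x₂)⊣x₃ − x₁⊣(x₂⊣x₃) = (x₂⊢x₁)⊣x₃ − x₂⊢(x₁⊣x₃), and (x₁⊢x₂)⊣x₃ = (x₁⊢x₃)⊢x₂. -/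
section PermDerivation

variable {A : Type*} [NonUnitalRing A]

theorem perm_mul_left_comm (perm : ∀ a b c : A, a * b * c = b * a * c) (a b c : A) :
    a * (b * c) = b * (a * c) := by
  rw [← mul_assoc, perm, mul_assoc]

variable {d : A → A} (hleib : ∀ a b : A, d (a * b) = d a * b + a * d b)
include hleib

theorem vdashOp_sub_vdashOp_eq (x y z : A) :
    vdashOp d (vdashOp d x y) z - vdashOp d x (vdashOp d y z) = -(x * y * d (d z)) := by
  simp only [vdashOp, hleib, mul_add, mul_assoc]
  abel

theorem dashvOp_sub_dashvOp_eq (x y z : A) :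
    dashvOp d (dashvOp d x y) z - dashvOp d x (dashvOp d y z) = -(d (d z) * y * x) := by
  simp only [dashvOp, hleib, add_mul, mul_assoc]
  abel

theorem dashvOp_vdashOp_sub_vdashOp_dashvOp_eq (perm : ∀ a b c : A, a * b * c = b * a * c)
    (x y z : A) :
    dashvOp d (vdashOp d y x) z - vdashOp d y (dashvOp d x z) = -(y * d (d z) * x) := by
  simp only [dashvOp, vdashOp, hleib, mul_add, mul_assoc, perm_mul_left_comm perm (d z) y]
  abel

end PermDerivation

theorem perm_der_novikov_dialgebra_identities_general {A : Type*} [NonUnitalRing A]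
    (perm : ∀ a b c : A, a * b * c = b * a * c)
    (d : A → A)
    (hleib : ∀ a b : A, d (a * b) = d a * b + a * d b)
    (x₁ x₂ x₃ : A) :
    (vdashOp d (vdashOp d x₁ x₂) x₃ - vdashOp d x₁ (vdashOp d x₂ x₃) =
      vdashOp d (vdashOp d x₂ x₁) x₃ - vdashOp d x₂ (vdashOp d x₁ x₃)) ∧
    (dashvOp d (dashvOp d x₁ x₂) x₃ = dashvOp d (dashvOp d x₁ x₃) x₂) ∧
    (dashvOp d (dashvOp d x₁ x₂) x₃ - dashvOp d x₁ (dashvOp d x₂ x₃) =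
      dashvOp d (vdashOp d x₂ x₁) x₃ - vdashOp d x₂ (dashvOp d x₁ x₃)) ∧
    (dashvOp d (vdashOp d x₁ x₂) x₃ = vdashOp d (vdashOp d x₁ x₃) x₂) := by
  refine ⟨?_, ?_, ?_, ?_⟩
  · rw [vdashOp_sub_vdashOp_eq hleib, vdashOp_sub_vdashOp_eq hleib, perm]
  · exact perm_mul_left_comm perm (d x₃) (d x₂) x₁
  · rw [dashvOp_sub_dashvOp_eq hleib, dashvOp_vdashOp_sub_vdashOp_dashvOp_eq hleib perm,
      mul_assoc, perm_mul_left_comm perm, ← mul_assoc]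
  · simp only [dashvOp, vdashOp]
    rw [perm_mul_left_comm perm, mul_assoc]

/-- In any perm algebra with derivation `d`, the operations `⊢` and `⊣`
satisfy the Novikov dialgebra identities. -/
theorem perm_der_novikov_dialgebra_identities {A : Type*} [NonUnitalRing A]
    (perm : ∀ a b c : A, a * b * c = b * a * c)
    (d : A → A) (hadd : ∀ a b : A, d (a + b) = d a + d b)
    (hleib : ∀ a b : A, d (a * b) = d a * b + a * d b)
    (x₁ x₂ x₃ : A) :
    (vdashOp d (vdashOp d x₁ x₂) x₃ - vdashOp d x₁ (vdashOp d x₂ x₃) =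
      vdashOp d (vdashOp d x₂ x₁) x₃ - vdashOp d x₂ (vdashOp d x₁ x₃)) ∧
    (dashvOp d (dashvOp d x₁ x₂) x₃ = dashvOp d (dashvOp d x₁ x₃) x₂) ∧
    (dashvOp d (dashvOp d x₁ x₂) x₃ - dashvOp d x₁ (dashvOp d x₂ x₃) =
      dashvOp d (vdashOp d x₂ x₁) x₃ - vdashOp d x₂ (dashvOp d x₁ x₃)) ∧
    (dashvOp d (vdashOp d x₁ x₂) x₃ = vdashOp d (vdashOp d x₁ x₃) x₂) :=
  perm_der_novikov_dialgebra_identities_general perm d hleib x₁ x₂ x₃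
end

section
/- In any perm algebra A with derivation d and a ≻ b := d(a)b, the following degree-5 identity holds: (x₁≻x₂)≻((x₃≻x₄)≻x₅) = ((x₁≻x₂)≻(x₃≻x₄))≻x₅ − ((x₁≻x₂)≻x₄)≻(x₃≻x₅) + x₄≻((x₁≻x₂)≻(x₃≻x₅)). -/
section PermAlgebra

variable {A : Type*} [NonUnitalRing A]

theorem perm_mul_mul_mul_swap_mid (perm : ∀ a b c : A, a * b * c = b * a * c) (a b c e : A) :
    a * b * c * e = a * c * b * e := by
  rw [perm (a * b) c e, ← mul_assoc, perm c a b]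

theorem succOp_succOp_succOp_right (perm : ∀ a b c : A, a * b * c = b * a * c) {d : A → A}
    (hleib : ∀ a b : A, d (a * b) = d a * b + a * d b) (u a b c : A) :
    succOp d u (succOp d (succOp d a b) c) =
      succOp d (succOp d u (succOp d a b)) c
      - succOp d (succOp d u b) (succOp d a c)
      + succOp d b (succOp d u (succOp d a c)) := by
  simp only [succOp, hleib, mul_add, add_mul, ← mul_assoc]
  rw [perm (d u) (d b) (d a), perm_mul_mul_mul_swap_mid perm (d (d u)) (d a) b c]
  abel

end PermAlgebra

theorem perm_der_succ_degree_five_identity_general {A : Type*} [NonUnitalRing A]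
    (perm : ∀ a b c : A, a * b * c = b * a * c)
    (d : A → A)
    (hleib : ∀ a b : A, d (a * b) = d a * b + a * d b)
    (x₁ x₂ x₃ x₄ x₅ : A) :
    succOp d (succOp d x₁ x₂) (succOp d (succOp d x₃ x₄) x₅) =
      succOp d (succOp d (succOp d x₁ x₂) (succOp d x₃ x₄)) x₅
      - succOp d (succOp d (succOp d x₁ x₂) x₄) (succOp d x₃ x₅)
      + succOp d x₄ (succOp d (succOp d x₁ x₂) (succOp d x₃ x₅)) :=
  succOp_succOp_succOp_right perm hleib (succOp d x₁ x₂) x₃ x₄ x₅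

/-- In any perm algebra with derivation `d` and `a ≻ b := d a * b`:
`(x₁≻x₂)≻((x₃≻x₄)≻x₅) = ((x₁≻x₂)≻(x₃≻x₄))≻x₅ − ((x₁≻x₂)≻x₄)≻(x₃≻x₅)
  + x₄≻((x₁≻x₂)≻(x₃≻x₅))`. -/
theorem perm_der_succ_degree_five_identity {A : Type*} [NonUnitalRing A]
    (perm : ∀ a b c : A, a * b * c = b * a * c)
    (d : A → A) (hadd : ∀ a b : A, d (a + b) = d a + d b)
    (hleib : ∀ a b : A, d (a * b) = d a * b + a * d b)
    (x₁ x₂ x₃ x₄ x₅ : A) :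
    succOp d (succOp d x₁ x₂) (succOp d (succOp d x₃ x₄) x₅) =
      succOp d (succOp d (succOp d x₁ x₂) (succOp d x₃ x₄)) x₅
      - succOp d (succOp d (succOp d x₁ x₂) x₄) (succOp d x₃ x₅)
      + succOp d x₄ (succOp d (succOp d x₁ x₂) (succOp d x₃ x₅)) :=
  perm_der_succ_degree_five_identity_general perm d hleib x₁ x₂ x₃ x₄ x₅
end

section
/- The identity (x₁≻x₂)≻((x₃≻x₄)≻x₅) = ((x₁≻x₂)≻(x₃≻x₄))≻x₅ − ((x₁≻x₂)≻x₄)≻(x₃≻x₅) + x₄≻((x₁≻x₂)≻(x₃≻x₅)) is a consequence of the SLC identities; i.e., it holds in every algebra (A, ≻) satisfying: (1) x₁≻(x₂≻x₃) = x₂≻(x₁≻x₃), (2) ⟨x₁, x₂≻x₃, x₄⟩ = ⟨x₁, x₃, x₂≻x₄⟩, and (3) ⟨x₁,x₂,x₃⟩≻x₄ = ⟨x₁,x₃,x₂⟩≻x₄, where ⟨a,b,c⟩ = (a≻b)≻c − a≻(b≻c). -/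
/-! Write `y = x₁ ≻ x₂`. Identity (2) for `⟨y, x₃ ≻ x₄, x₅⟩` expands to the claim up to the term
`y ≻ (x₄ ≻ (x₃ ≻ x₅))`, which left commutativity (1) turns into `x₄ ≻ (y ≻ (x₃ ≻ x₅))`. -/

theorem slc_degree_four_identity {A : Type*} [AddCommGroup A] (op : A → A → A)
    (assoc : A → A → A → A)
    (hassoc : ∀ a b c : A, assoc a b c = op (op a b) c - op a (op b c))
    (id1 : ∀ x₁ x₂ x₃ : A, op x₁ (op x₂ x₃) = op x₂ (op x₁ x₃))
    (id2 : ∀ x₁ x₂ x₃ x₄ : A, assoc x₁ (op x₂ x₃) x₄ = assoc x₁ x₃ (op x₂ x₄))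
    (y a b c : A) :
    op y (op (op a b) c) = op (op y (op a b)) c - op (op y b) (op a c) + op b (op y (op a c)) := by
  have h := id2 y a b c
  rw [hassoc, hassoc, id1 y b (op a c)] at h
  rw [sub_add, ← h]
  abel

theorem slc_degree_five_identity_general {A : Type*} [AddCommGroup A]
    (op : A → A → A)
    (assoc : A → A → A → A)
    (hassoc : ∀ a b c : A, assoc a b c = op (op a b) c - op a (op b c))
    (id1 : ∀ x₁ x₂ x₃ : A, op x₁ (op x₂ x₃) = op x₂ (op x₁ x₃))
    (id2 : ∀ x₁ x₂ x₃ x₄ : A,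
      assoc x₁ (op x₂ x₃) x₄ = assoc x₁ x₃ (op x₂ x₄))
    (x₁ x₂ x₃ x₄ x₅ : A) :
    op (op x₁ x₂) (op (op x₃ x₄) x₅) =
      op (op (op x₁ x₂) (op x₃ x₄)) x₅
      - op (op (op x₁ x₂) x₄) (op x₃ x₅)
      + op x₄ (op (op x₁ x₂) (op x₃ x₅)) :=
  slc_degree_four_identity op assoc hassoc id1 id2 (op x₁ x₂) x₃ x₄ x₅

/-- The degree-5 identity holds in every SLC algebra, i.e. in every
(nonassociative) algebra `(A, ≻)` satisfying the three SLC identities. -/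
theorem slc_degree_five_identity {A : Type*} [AddCommGroup A]
    (op : A → A → A)
    (hdistl : ∀ a b c : A, op (a + b) c = op a c + op b c)
    (hdistr : ∀ a b c : A, op a (b + c) = op a b + op a c)
    (assoc : A → A → A → A)
    (hassoc : ∀ a b c : A, assoc a b c = op (op a b) c - op a (op b c))
    (id1 : ∀ x₁ x₂ x₃ : A, op x₁ (op x₂ x₃) = op x₂ (op x₁ x₃))
    (id2 : ∀ x₁ x₂ x₃ x₄ : A,
      assoc x₁ (op x₂ x₃) x₄ = assoc x₁ x₃ (op x₂ x₄))
    (id3 : ∀ x₁ x₂ x₃ x₄ : A,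
      op (assoc x₁ x₂ x₃) x₄ = op (assoc x₁ x₃ x₂) x₄)
    (x₁ x₂ x₃ x₄ x₅ : A) :
    op (op x₁ x₂) (op (op x₃ x₄) x₅) =
      op (op (op x₁ x₂) (op x₃ x₄)) x₅
      - op (op (op x₁ x₂) x₄) (op x₃ x₅)
      + op x₄ (op (op x₁ x₂) (op x₃ x₅)) :=
  slc_degree_five_identity_general op assoc hassoc id1 id2 x₁ x₂ x₃ x₄ x₅
end

section
/- The dimension of the multilinear component of arity n of the operad DerPerm_≻ equals n·C(2n−3, n−1), where C denotes the binomial coefficient. -/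
/-- Basis monomials of the free perm algebra with derivation on generators `X`. -/
abbrev PermMon (X : Type*) := Multiset (X × ℕ) × (X × ℕ)

/-- The multilinear arity-`n` basis monomials of `DerPerm_≻`: every variable
appears exactly once, the total derivation degree is `n - 1` (i.e. the weight
is `-1`) and the rightmost factor is undifferentiated. -/
def derPermSuccBasis (n : ℕ) : Set (PermMon (Fin n)) :=
  {c | c.1.map Prod.fst + {c.2.1} = (Finset.univ : Finset (Fin n)).val ∧
       (c.1.map Prod.snd).sum + c.2.2 = n - 1 ∧ c.2.2 = 0}

/-!
A basis monomial is determined by its undifferentiated last variable `x` and the derivation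
orders `f` of the remaining `n - 1` variables, which sum to `n - 1`. By stars and bars there are
`C(2n - 3, n - 1)` such `f` for each of the `n` choices of `x`, and the monomials are linearly
independent.
-/

open Finset

theorem Finset.card_piAntidiag_nat_eq_choose {ι : Type*} [DecidableEq ι] (s : Finset ι)
    (n : ℕ) :
    #(piAntidiag s n) = (#s + n - 1).choose n := by
  simpa [finsuppAntidiag] using card_finsuppAntidiag_nat_eq_choose (s := s) n

theorem Finsupp.finrank_span_image_single_one (K : Type*) {α : Type*} [DivisionRing K]
    (s : Finset α) :
    Module.finrank K (Submodule.span K ((fun a => Finsupp.single a (1 : K)) '' (s : Set α))) =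
      #s := by
  classical
  rw [← coe_image, finrank_span_finset_eq_card, card_image_of_injective]
  · exact (Finsupp.linearIndependent_single_one K α).injective
  · rw [coe_image]
    exact ((Finsupp.linearIndependent_single_one K α).linearIndepOn _).id_image

theorem Multiset.exists_eq_map_graph {α β : Type*} [Zero β] {M : Multiset (α × β)}
    (h : (M.map Prod.fst).Nodup) :
    ∃ f : α → β, (∀ a ∉ M.map Prod.fst, f a = 0) ∧
      M = (M.map Prod.fst).map fun a => (a, f a) := by
  classical
  let f a := if h : ∃ p ∈ M, p.1 = a then h.choose.2 else 0
  refine ⟨f, fun a ha => dif_neg fun ⟨p, hp, hpa⟩ => ha (Multiset.mem_map.2 ⟨p, hp, hpa⟩),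
    ?_⟩
  conv_lhs => rw [← Multiset.map_id M]
  rw [Multiset.map_map]
  refine Multiset.map_congr rfl fun p hp => ?_
  have hex : ∃ q ∈ M, q.1 = p.1 := ⟨p, hp, rfl⟩
  have hfp : f p.1 = p.2 := by
    rw [show f p.1 = hex.choose.2 from dif_pos hex,
      Multiset.inj_on_of_nodup_map h _ hex.choose_spec.1 p hp hex.choose_spec.2]
  exact Prod.ext rfl hfp.symm

namespace PermMon

variable {X : Type*} [Fintype X] [DecidableEq X]

/-- The last factor records `f x`, which vanishes on the basis, so that `ofExponents` is
injective on all of `Σ _, X → ℕ`. -/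
def ofExponents (p : Σ _ : X, X → ℕ) : PermMon X :=
  ((univ.erase p.1).val.map fun y => (y, p.2 y), (p.1, p.2 p.1))

theorem ofExponents_injective : Function.Injective (ofExponents (X := X)) := by
  rintro ⟨x, f⟩ ⟨x', f'⟩ h
  simp only [ofExponents, Prod.mk.injEq] at h
  obtain ⟨hM, rfl, hx⟩ := h
  refine Sigma.ext rfl (heq_of_eq (funext fun y => ?_))
  rcases eq_or_ne y x with rfl | hy
  · exact hx
  · have : (y, f y) ∈ (univ.erase x).val.map fun y => (y, f' y) :=
      hM ▸ Multiset.mem_map_of_mem _ (mem_erase.2 ⟨hy, mem_univ y⟩)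
    obtain ⟨z, -, hz⟩ := Multiset.mem_map.1 this
    simp only [Prod.mk.injEq] at hz
    obtain ⟨rfl, hz⟩ := hz
    exact hz.symm

theorem setOf_eq_image_ofExponents (d : ℕ) :
    {c : PermMon X | c.1.map Prod.fst + {c.2.1} = (univ : Finset X).val ∧
        (c.1.map Prod.snd).sum + c.2.2 = d ∧ c.2.2 = 0} =
      ofExponents '' ↑((univ : Finset X).sigma fun x => piAntidiag (univ.erase x) d) := by
  ext ⟨M, x, k⟩
  simp only [Set.mem_ofPred_eq, Set.mem_image, mem_coe, mem_sigma, mem_univ, true_and,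
    mem_piAntidiag, Sigma.exists]
  constructor
  · rintro ⟨hkeys, hsum, rfl⟩
    rw [Multiset.add_comm, Multiset.singleton_add] at hkeys
    have hnd : (x ::ₘ M.map Prod.fst).Nodup := hkeys ▸ univ.nodup
    have hkeys' : M.map Prod.fst = (univ.erase x).val := by
      rw [erase_val, ← hkeys, Multiset.erase_cons_head]
    obtain ⟨f, hf0, hM⟩ := Multiset.exists_eq_map_graph (Multiset.nodup_cons.1 hnd).2
    rw [hkeys'] at hf0 hM
    refine ⟨x, f, ⟨?_, fun i => not_imp_comm.1 (hf0 i)⟩, ?_⟩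
    · rw [← hsum, add_zero, hM, Multiset.map_map]
      rfl
    · rw [ofExponents, ← hM]
      exact congrArg (fun k => (M, x, k)) (hf0 x (by rw [mem_val]; exact notMem_erase x univ))
  · rintro ⟨x', f, ⟨hsum, hsupp⟩, h⟩
    simp only [ofExponents, Prod.mk.injEq] at h
    obtain ⟨rfl, rfl, rfl⟩ := h
    have hfx : f x' = 0 := by
      by_contra hx
      simpa using hsupp x' hx
    refine ⟨?_, ?_, hfx⟩
    · rw [Multiset.map_map, Function.comp_def, Multiset.map_id', erase_val,
        Multiset.add_comm, Multiset.singleton_add, Multiset.cons_erase (mem_univ_val x')]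
    · rw [Multiset.map_map, hfx, add_zero, ← hsum]
      rfl

end PermMon

theorem dim_derPermSucc_general (n : ℕ) :
    Module.finrank ℚ
      (Submodule.span ℚ
        ((fun c => Finsupp.single c (1 : ℚ)) '' derPermSuccBasis n)) =
      n * Nat.choose (2 * n - 3) (n - 1) := by
  rw [derPermSuccBasis, PermMon.setOf_eq_image_ofExponents, ← coe_image,
    Finsupp.finrank_span_image_single_one,
    card_image_of_injective _ PermMon.ofExponents_injective, card_sigma]
  simp only [card_piAntidiag_nat_eq_choose, card_erase_of_mem (mem_univ _), card_univ,
    Fintype.card_fin, sum_const, smul_eq_mul]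
  rcases n with _ | m
  · rfl
  · congr 2
    omega

/-- `dim DerPerm_≻(n) = n * C(2n-3, n-1)`. -/
theorem dim_derPermSucc (n : ℕ) (hn : 0 < n) :
    Module.finrank ℚ
      (Submodule.span ℚ
        ((fun c => Finsupp.single c (1 : ℚ)) '' derPermSuccBasis n)) =
      n * Nat.choose (2 * n - 3) (n - 1) :=
  dim_derPermSucc_general n
end

section
/- In any perm algebra, the commutator [a,b] = ab − ba satisfies the metabelian identity: [[a,b],[c,e]] = 0 for all a,b,c,e. -/
theorem commutator_mul_eq_zero_of_left_comm {A : Type*} [NonUnitalNonAssocRing A]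
    (perm : ∀ a b c : A, a * b * c = b * a * c) (a b x : A) :
    (a * b - b * a) * x = 0 := by
  rw [sub_mul, perm a b x, sub_self]

/-- In any perm algebra, the commutator satisfies the metabelian identity
`[[a,b],[c,e]] = 0`. -/
theorem perm_commutator_metabelian {A : Type*} [NonUnitalRing A]
    (perm : ∀ a b c : A, a * b * c = b * a * c) (a b c e : A) :
    (a * b - b * a) * (c * e - e * c) - (c * e - e * c) * (a * b - b * a) = 0 := by
  rw [commutator_mul_eq_zero_of_left_comm perm, commutator_mul_eq_zero_of_left_comm perm,
    sub_self]
end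

section
/- Any algebra (A, ≻) that embeds into a perm algebra with derivation via a ≻ b = d(a)b is an SLC algebra: it satisfies x₁≻(x₂≻x₃) = x₂≻(x₁≻x₃), ⟨x₁, x₂≻x₃, x₄⟩ = ⟨x₁, x₃, x₂≻x₄⟩, and ⟨x₁,x₂,x₃⟩≻x₄ = ⟨x₁,x₃,x₂⟩≻x₄. -/
/-!
Transport the identities along `φ`: in the perm algebra `P` the product `a ≻ b := d a * b` has
associator `⟨a, b, c⟩ = d (d a) * b * c` (the Leibniz rule cancels the `d a * d b * c` terms), and
the perm identity `abc = bac` lets the two middle factors of any product of four elements commute.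
All three SLC identities then hold for `≻` on `P`, and injectivity of `φ` pulls them back to `A`.
-/

section DerivedProduct

variable {P : Type*} [NonUnitalRing P]

theorem mul_mul_mul_comm_middle_of_perm (perm : ∀ a b c : P, a * b * c = b * a * c)
    (x y z w : P) : x * y * z * w = x * z * y * w := by
  rw [perm (x * y) z w, ← mul_assoc z x y, perm z x y]

variable (d : P → P)

theorem derived_left_comm_of_perm (perm : ∀ a b c : P, a * b * c = b * a * c) (a b c : P) :
    d a * (d b * c) = d b * (d a * c) := by
  rw [← mul_assoc, perm, mul_assoc]

theorem derived_associator_eq (hleib : ∀ a b : P, d (a * b) = d a * b + a * d b) (a b c : P) :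
    d (d a * b) * c - d a * (d b * c) = d (d a) * b * c := by
  rw [hleib, add_mul, mul_assoc (d a), add_sub_cancel_right]

theorem derived_associator_middle_comm_of_perm (perm : ∀ a b c : P, a * b * c = b * a * c)
    (a b c e : P) : d (d a) * (d b * c) * e = d (d a) * c * (d b * e) := by
  rw [← mul_assoc, ← mul_assoc, mul_mul_mul_comm_middle_of_perm perm]

theorem d_associator_mul_comm_of_perm (perm : ∀ a b c : P, a * b * c = b * a * c)
    (hleib : ∀ a b : P, d (a * b) = d a * b + a * d b) (x b c e : P) :
    d (x * b * c) * e = d (x * c * b) * e := by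
  have expand : ∀ y z : P,
      d (x * y * z) * e = d x * y * z * e + x * d y * z * e + x * y * d z * e := by
    intro y z
    rw [hleib, hleib, add_mul, add_mul, add_mul, mul_assoc x y (d z), ← mul_assoc x y (d z)]
  rw [expand, expand, mul_mul_mul_comm_middle_of_perm perm (d x) b c,
    mul_mul_mul_comm_middle_of_perm perm x (d b) c, mul_mul_mul_comm_middle_of_perm perm x b (d c)]
  abel

end DerivedProduct

theorem special_implies_slc_general {K A P : Type*} [Field K]
    [AddCommGroup A] [Module K A] [NonUnitalRing P] [Module K P]
    (op : A → A → A)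
    (assoc : A → A → A → A)
    (hassoc : ∀ a b c : A, assoc a b c = op (op a b) c - op a (op b c))
    (perm : ∀ a b c : P, a * b * c = b * a * c)
    (d : P → P)
    (hleib : ∀ a b : P, d (a * b) = d a * b + a * d b)
    (φ : A →ₗ[K] P) (hinj : Function.Injective φ)
    (hembed : ∀ a b : A, φ (op a b) = d (φ a) * φ b) :
    (∀ x₁ x₂ x₃ : A, op x₁ (op x₂ x₃) = op x₂ (op x₁ x₃)) ∧
    (∀ x₁ x₂ x₃ x₄ : A,
      assoc x₁ (op x₂ x₃) x₄ = assoc x₁ x₃ (op x₂ x₄)) ∧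
    (∀ x₁ x₂ x₃ x₄ : A,
      op (assoc x₁ x₂ x₃) x₄ = op (assoc x₁ x₃ x₂) x₄) := by
  have φ_assoc : ∀ a b c : A, φ (assoc a b c) = d (d (φ a)) * φ b * φ c := by
    intro a b c
    rw [hassoc, map_sub, hembed, hembed, hembed, hembed, derived_associator_eq d hleib]
  refine ⟨fun x₁ x₂ x₃ => hinj ?_, fun x₁ x₂ x₃ x₄ => hinj ?_, fun x₁ x₂ x₃ x₄ => hinj ?_⟩
  · rw [hembed, hembed, hembed, hembed, derived_left_comm_of_perm d perm]
  · rw [φ_assoc, φ_assoc, hembed, hembed, derived_associator_middle_comm_of_perm d perm]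
  · rw [hembed, hembed, φ_assoc, φ_assoc, d_associator_mul_comm_of_perm d perm hleib]

/-- Any algebra `(A, ≻)` that embeds into a perm algebra with derivation via
`a ≻ b ↦ d(a)·b` satisfies the three SLC identities. -/
theorem special_implies_slc {K A P : Type*} [Field K]
    [AddCommGroup A] [Module K A] [NonUnitalRing P] [Module K P]
    (op : A → A → A)
    (assoc : A → A → A → A)
    (hassoc : ∀ a b c : A, assoc a b c = op (op a b) c - op a (op b c))
    (perm : ∀ a b c : P, a * b * c = b * a * c)
    (d : P → P) (hd_add : ∀ a b : P, d (a + b) = d a + d b)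
    (hleib : ∀ a b : P, d (a * b) = d a * b + a * d b)
    (φ : A →ₗ[K] P) (hinj : Function.Injective φ)
    (hembed : ∀ a b : A, φ (op a b) = d (φ a) * φ b) :
    (∀ x₁ x₂ x₃ : A, op x₁ (op x₂ x₃) = op x₂ (op x₁ x₃)) ∧
    (∀ x₁ x₂ x₃ x₄ : A,
      assoc x₁ (op x₂ x₃) x₄ = assoc x₁ x₃ (op x₂ x₄)) ∧
    (∀ x₁ x₂ x₃ x₄ : A,
      op (assoc x₁ x₂ x₃) x₄ = op (assoc x₁ x₃ x₂) x₄) :=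
  special_implies_slc_general op assoc hassoc perm d hleib φ hinj hembed
end

section
/- In any perm algebra with derivation d and a ≻ b := d(a)b, the associator identity ⟨x₁, x₂, x₃ ≻ x₄⟩ = x₃ ≻ ⟨x₁, x₂, x₄⟩ holds, where ⟨a,b,c⟩ = (a≻b)≻c − a≻(b≻c). -/
theorem mul_left_comm_of_perm {A : Type*} [NonUnitalRing A]
    (perm : ∀ a b c : A, a * b * c = b * a * c) (a b c : A) :
    a * (b * c) = b * (a * c) := by
  rw [← mul_assoc, perm, mul_assoc]

theorem succAssoc_eq_of_leibniz {A : Type*} [NonUnitalRing A] {d : A → A}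
    (hleib : ∀ a b : A, d (a * b) = d a * b + a * d b) (a b c : A) :
    succAssoc d a b c = d (d a) * b * c := by
  -- `d (d a * b) = d² a * b + d a * d b`, and the second term cancels against `a ≻ (b ≻ c)`.
  simp only [succAssoc, succOp, hleib]
  noncomm_ring

theorem perm_der_succ_associator_right_general {A : Type*} [NonUnitalRing A]
    (perm : ∀ a b c : A, a * b * c = b * a * c)
    (d : A → A)
    (hleib : ∀ a b : A, d (a * b) = d a * b + a * d b)
    (x₁ x₂ x₃ x₄ : A) :
    succAssoc d x₁ x₂ (succOp d x₃ x₄) = succOp d x₃ (succAssoc d x₁ x₂ x₄) := by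
  rw [succAssoc_eq_of_leibniz hleib, succAssoc_eq_of_leibniz hleib]
  exact mul_left_comm_of_perm perm _ _ _

/-- In any perm algebra with derivation `d` and `a ≻ b := d a * b`:
`⟨x₁, x₂, x₃ ≻ x₄⟩ = x₃ ≻ ⟨x₁, x₂, x₄⟩`. -/
theorem perm_der_succ_associator_right {A : Type*} [NonUnitalRing A]
    (perm : ∀ a b c : A, a * b * c = b * a * c)
    (d : A → A) (hadd : ∀ a b : A, d (a + b) = d a + d b)
    (hleib : ∀ a b : A, d (a * b) = d a * b + a * d b)
    (x₁ x₂ x₃ x₄ : A) :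
    succAssoc d x₁ x₂ (succOp d x₃ x₄) = succOp d x₃ (succAssoc d x₁ x₂ x₄) :=
  perm_der_succ_associator_right_general perm d hleib x₁ x₂ x₃ x₄
end
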